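/- arXiv:1702.04840 — 2 statements merged into one kernel-verified Lean document; each statement's English description precedes it below -/
import Mathlib

section
/- Let k be a field whose characteristic is different from 2 and from 5, let c₁₂, c₁₈, c₂₄, c₃₀ ∈ k, and let F = y² − (x⁵ + c₁₂x³ + c₁₈x² + c₂₄x + c₃₀) ∈ k[x,y]. Suppose a₁ ∈ kˣ has finite multiplicative order ℓ with ℓ ∉ {1, 2, 4, 5, 8, 10}, and suppose that substituting y ↦ a₁⁵y and x ↦ a₁²x into F yields a₁¹⁰·F. Then c₁₂ = c₂₄ = c₃₀ = 0; consequently F = y² − x²(x³ + c₁₈) and the affine curve F = 0 has a singular point at the origin (F, ∂F/∂x and ∂F/∂y all vanish at (0,0)). -/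
/-!
STATEMENT 7: In characteristic ≠ 2, 5, if `a₁ ∈ kˣ` has finite multiplicative order
`ℓ ∉ {1,2,4,5,8,10}` and the substitution `y ↦ a₁⁵y`, `x ↦ a₁²x` carries
`F = y² − (x⁵ + c₁₂x³ + c₁₈x² + c₂₄x + c₃₀)` to `a₁¹⁰·F`, then `c₁₂ = c₂₄ = c₃₀ = 0`,
so `F = y² − x²(x³ + c₁₈)` and the affine curve `F = 0` is singular at the origin.
-/

set_option maxRecDepth 10000
set_option linter.unusedVariables false

open MvPolynomial

/-- Here `X 0 = x` and `X 1 = y`. -/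
theorem stmt_7 (k : Type*) [Field k] (h2 : (2 : k) ≠ 0) (h5 : (5 : k) ≠ 0)
    (c12 c18 c24 c30 : k)
    (F : MvPolynomial (Fin 2) k)
    (hF : F = X 1 ^ 2
      - (X 0 ^ 5 + C c12 * X 0 ^ 3 + C c18 * X 0 ^ 2 + C c24 * X 0 + C c30))
    (u : kˣ) (ℓ : ℕ) (hord : orderOf u = ℓ) (hfin : ℓ ≠ 0)
    (hℓ : ℓ ∉ ({1, 2, 4, 5, 8, 10} : Set ℕ))
    (hsub : MvPolynomial.bind₁
        ![C (u : k) ^ 2 * X 0, C (u : k) ^ 5 * X 1] F = C ((u : k) ^ 10) * F) :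
    c12 = 0 ∧ c24 = 0 ∧ c30 = 0 ∧
    F = X 1 ^ 2 - X 0 ^ 2 * (X 0 ^ 3 + C c18) ∧
    eval ![(0 : k), 0] F = 0 ∧
    eval ![(0 : k), 0] (pderiv 0 F) = 0 ∧
    eval ![(0 : k), 0] (pderiv 1 F) = 0 := by
  subst hF
  have h := congrArg (aeval (R := k) (S₁ := Polynomial k) ![Polynomial.X, 0]) hsub
  simp only [aeval_bind₁] at h
  simp [map_sub, map_add, map_mul, map_pow, mul_pow, Matrix.cons_val_zero,
    Matrix.cons_val_one] at h
  simp only [mul_add, mul_neg, ← Polynomial.C_pow, ← Polynomial.C_mul, ← mul_assoc] at h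
  have h3 := congrArg (fun p => Polynomial.coeff p 3) h
  have h1 := congrArg (fun p => Polynomial.coeff p 1) h
  have h0 := congrArg (fun p => Polynomial.coeff p 0) h
  simp only [Polynomial.coeff_add, Polynomial.coeff_neg, Polynomial.coeff_C_mul,
    Polynomial.coeff_X_pow, Polynomial.coeff_X, Polynomial.coeff_C] at h3 h1 h0
  norm_num at h3 h1 h0
  -- h3 : c12 * (↑u ^ 2) ^ 3 = ↑u ^ 10 * c12
  -- h1 : c24 * ↑u ^ 2 = ↑u ^ 10 * c24
  -- h0 : c30 = ↑u ^ 10 * c30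
  have hu0 : (u : k) ≠ 0 := u.ne_zero
  simp only [Set.mem_insert_iff, Set.mem_singleton_iff, not_or] at hℓ
  obtain ⟨hn1, hn2, hn4, hn5, hn8, hn10⟩ := hℓ
  have hdvd : ∀ n : ℕ, ((u : k)) ^ n = 1 → ℓ ∣ n := fun n hn => by
    rw [← hord]
    exact orderOf_dvd_of_pow_eq_one (Units.ext (by simpa using hn))
  have h4 : ((u : k)) ^ 4 ≠ 1 := fun hh => by
    have hd := hdvd 4 hh
    have hle := Nat.le_of_dvd (by norm_num) hd
    interval_cases ℓ <;> omega
  have h8 : ((u : k)) ^ 8 ≠ 1 := fun hh => by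
    have hd := hdvd 8 hh
    have hle := Nat.le_of_dvd (by norm_num) hd
    interval_cases ℓ <;> omega
  have h10 : ((u : k)) ^ 10 ≠ 1 := fun hh => by
    have hd := hdvd 10 hh
    have hle := Nat.le_of_dvd (by norm_num) hd
    interval_cases ℓ <;> omega
  have hc12 : c12 = 0 := by
    have e : c12 * ((u : k) ^ 4 - 1) * (u : k) ^ 6 = 0 := by linear_combination -h3
    rcases mul_eq_zero.mp e with e1 | e1
    · rcases mul_eq_zero.mp e1 with e2 | e2
      · exact e2
      · exact absurd (sub_eq_zero.mp e2) h4
    · exact absurd e1 (pow_ne_zero _ hu0)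
  have hc24 : c24 = 0 := by
    have e : c24 * ((u : k) ^ 8 - 1) * (u : k) ^ 2 = 0 := by linear_combination -h1
    rcases mul_eq_zero.mp e with e1 | e1
    · rcases mul_eq_zero.mp e1 with e2 | e2
      · exact e2
      · exact absurd (sub_eq_zero.mp e2) h8
    · exact absurd e1 (pow_ne_zero _ hu0)
  have hc30 : c30 = 0 := by
    have e : c30 * ((u : k) ^ 10 - 1) = 0 := by linear_combination -h0
    rcases mul_eq_zero.mp e with e1 | e1
    · exact e1
    · exact absurd (sub_eq_zero.mp e1) h10
  subst hc12 hc24 hc30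
  refine ⟨rfl, rfl, rfl, by push_cast [map_zero]; ring, ?_, ?_, ?_⟩
  · simp
  · simp [pderiv_X]
  · simp [pderiv_X]
end

section
/- Let k be an algebraically closed field of characteristic different from 3. Every trivector γ lying in the span of the three vectors [123]+[456]+[789], [147]+[258]+[369], [159]+[267]+[348] (a reflection hyperplane of the standard Cartan subspace) admits a destabilizing 6-dimensional subspace U ⊆ V₉; in particular, no element of a reflection hyperplane is GIT-stable. -/
/-!
STATEMENT 12: Over an algebraically closed field of characteristic ≠ 3, every trivector in
the span of `[123]+[456]+[789]`, `[147]+[258]+[369]`, `[159]+[267]+[348]` (a reflection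
hyperplane of the standard Cartan subspace) admits a destabilizing 6-dimensional subspace.
-/

noncomputable section

abbrev V9 (k : Type*) [Field k] := Fin 9 → k

def stdE (k : Type*) [Field k] (i : Fin 9) : V9 k := Pi.single i 1

/-- The basis trivector `[ijl] = eᵢ ∧ eⱼ ∧ e_l` (0-indexed). -/
def T (k : Type*) [Field k] (i j l : Fin 9) : ExteriorAlgebra k (V9 k) :=
  ExteriorAlgebra.ι k (stdE k i) * ExteriorAlgebra.ι k (stdE k j) *
    ExteriorAlgebra.ι k (stdE k l)

/-- `γ` admits a destabilizing 6-dimensional subspace. -/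
def Destab (k : Type*) [Field k] (γ : ExteriorAlgebra k (V9 k)) : Prop :=
  ∃ U : Submodule k (V9 k), Module.finrank k U = 6 ∧
    γ ∈ Submodule.span k {x | ∃ u ∈ U, ∃ u' ∈ U, ∃ v : V9 k,
      x = ExteriorAlgebra.ι k u * ExteriorAlgebra.ι k u' * ExteriorAlgebra.ι k v}

/-!
The subspace `U = ⟨e₂, e₃, e₄, e₅, e₇, e₉⟩` (the 0-indexed `{1, 2, 3, 4, 6, 8}` below) contains
at least two of the three basis vectors of each of the nine index triples
`123, 456, 789, 147, 258, 369, 159, 267, 348` occurring in the three spanning trivectors.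
By antisymmetry each such `[ijk]` can be rewritten, up to sign, as `u ∧ u' ∧ v` with
`u, u' ∈ U`, so the whole span lies in `⋀²U ∧ V₉`.
-/

open ExteriorAlgebra

section DestabilizingSpan

variable {R M : Type*} [CommRing R] [AddCommGroup M] [Module R M]

def destabilizingSpan (U : Submodule R M) : Submodule R (ExteriorAlgebra R M) :=
  Submodule.span R {x | ∃ u ∈ U, ∃ u' ∈ U, ∃ v : M, x = ι R u * ι R u' * ι R v}

theorem ι_mul_ι_eq_neg (a b : M) : ι R a * ι R b = -(ι R b * ι R a) :=
  eq_neg_of_add_eq_zero_left (ι_add_mul_swap a b)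

theorem ι_mul_ι_mul_ι_cycle (a b c : M) :
    ι R a * ι R b * ι R c = ι R b * ι R c * ι R a := by
  rw [ι_mul_ι_eq_neg a b, neg_mul, mul_assoc, ι_mul_ι_eq_neg a c, mul_neg, neg_neg, ← mul_assoc]

theorem ι_mul_ι_mul_ι_swap_right (a b c : M) :
    ι R a * ι R b * ι R c = -(ι R a * ι R c * ι R b) := by
  rw [mul_assoc, ι_mul_ι_eq_neg b c, mul_neg, ← mul_assoc]

theorem ι_mul_ι_mul_ι_mem_destabilizingSpan {U : Submodule R M} {a b c : M}
    (h : a ∈ U ∧ b ∈ U ∨ a ∈ U ∧ c ∈ U ∨ b ∈ U ∧ c ∈ U) :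
    ι R a * ι R b * ι R c ∈ destabilizingSpan U := by
  rcases h with ⟨ha, hb⟩ | ⟨ha, hc⟩ | ⟨hb, hc⟩
  · exact Submodule.subset_span ⟨a, ha, b, hb, c, rfl⟩
  · rw [ι_mul_ι_mul_ι_swap_right]
    exact Submodule.neg_mem _ (Submodule.subset_span ⟨a, ha, c, hc, b, rfl⟩)
  · rw [ι_mul_ι_mul_ι_cycle]
    exact Submodule.subset_span ⟨b, hb, c, hc, a, rfl⟩

end DestabilizingSpan

section Coordinates

variable (k : Type*) [Field k]

def coordinateSubspace (s : Finset (Fin 9)) : Submodule k (V9 k) :=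
  Submodule.span k (Set.range fun i : s => stdE k i)

theorem finrank_coordinateSubspace (s : Finset (Fin 9)) :
    Module.finrank k (coordinateSubspace k s) = s.card := by
  have hli : LinearIndependent k fun i : s => stdE k i :=
    (Pi.linearIndependent_single_one (Fin 9) k).comp _ Subtype.val_injective
  rw [coordinateSubspace, finrank_span_eq_card hli, Fintype.card_coe]

theorem T_mem_destabilizingSpan_coordinateSubspace {s : Finset (Fin 9)} {i j l : Fin 9}
    (h : i ∈ s ∧ j ∈ s ∨ i ∈ s ∧ l ∈ s ∨ j ∈ s ∧ l ∈ s) :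
    T k i j l ∈ destabilizingSpan (coordinateSubspace k s) := by
  have hmem {m : Fin 9} (hm : m ∈ s) : stdE k m ∈ coordinateSubspace k s :=
    Submodule.subset_span ⟨⟨m, hm⟩, rfl⟩
  exact ι_mul_ι_mul_ι_mem_destabilizingSpan <|
    h.imp (.imp hmem hmem) (.imp (.imp hmem hmem) (.imp hmem hmem))

end Coordinates

theorem stmt_12_general (k : Type*) [Field k]
    (γ : ExteriorAlgebra k (V9 k))
    (hγ : γ ∈ Submodule.span k
      ({T k 0 1 2 + T k 3 4 5 + T k 6 7 8,
        T k 0 3 6 + T k 1 4 7 + T k 2 5 8,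
        T k 0 4 8 + T k 1 5 6 + T k 2 3 7} : Set (ExteriorAlgebra k (V9 k)))) :
    Destab k γ := by
  let s : Finset (Fin 9) := {1, 2, 3, 4, 6, 8}
  have hT {i j l : Fin 9} (h : i ∈ s ∧ j ∈ s ∨ i ∈ s ∧ l ∈ s ∨ j ∈ s ∧ l ∈ s) :=
    T_mem_destabilizingSpan_coordinateSubspace k h
  refine ⟨coordinateSubspace k s, finrank_coordinateSubspace k s, Submodule.span_le.mpr ?_ hγ⟩
  rintro x (rfl | rfl | rfl) <;>
    exact add_mem (add_mem (hT (by decide)) (hT (by decide))) (hT (by decide))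

theorem stmt_12 (k : Type*) [Field k] [IsAlgClosed k] (h3 : (3 : k) ≠ 0)
    (γ : ExteriorAlgebra k (V9 k))
    (hγ : γ ∈ Submodule.span k
      ({T k 0 1 2 + T k 3 4 5 + T k 6 7 8,
        T k 0 3 6 + T k 1 4 7 + T k 2 5 8,
        T k 0 4 8 + T k 1 5 6 + T k 2 3 7} : Set (ExteriorAlgebra k (V9 k)))) :
    Destab k γ :=
  stmt_12_general k γ hγ

end
end
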